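/- For every integer k ≥ 4, there exists a finite connected well-covered simple graph G with α(G) = k whose independence polynomial is not unimodal. -/

import Mathlib

open Polynomial Classical in
/-- The set of stable (independent) sets of a graph, as finsets. -/
noncomputable def stableSets {V : Type*} [Fintype V] (G : SimpleGraph V) : Finset (Finset V) :=
  Finset.univ.filter (fun s : Finset V => ∀ v ∈ s, ∀ w ∈ s, ¬ G.Adj v w)

open Polynomial in
/-- The independence polynomial of a finite simple graph. -/
noncomputable def indepPoly {V : Type*} [Fintype V] (G : SimpleGraph V) : Polynomial ℤ :=
  ∑ s ∈ stableSets G, X ^ s.card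

/-- The independence number: the maximum size of a stable set. -/
noncomputable def indepNum {V : Type*} [Fintype V] (G : SimpleGraph V) : ℕ :=
  (stableSets G).sup Finset.card

open Classical in
/-- `sCount G k` is the number of stable sets of cardinality `k` in `G`. -/
noncomputable def sCount {V : Type*} [Fintype V] (G : SimpleGraph V) (k : ℕ) : ℕ :=
  ((stableSets G).filter (fun s => s.card = k)).card

/-- A polynomial is unimodal if its coefficient sequence increases up to some mode `k`
and decreases afterwards. -/
def PolyUnimodal (p : Polynomial ℤ) : Prop :=
  ∃ k, (∀ i j, i ≤ j → j ≤ k → p.coeff i ≤ p.coeff j) ∧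
    (∀ i j, k ≤ i → i ≤ j → p.coeff j ≤ p.coeff i)

/-- A polynomial is log-concave if `a_{i-1} * a_{i+1} ≤ a_i ^ 2` for all `i ≥ 1`. -/
def PolyLogConcave (p : Polynomial ℤ) : Prop :=
  ∀ i, 1 ≤ i → p.coeff (i - 1) * p.coeff (i + 1) ≤ p.coeff i ^ 2

/-- A graph is well-covered if every maximal stable set is a maximum stable set. -/
def WellCovered {V : Type*} [Fintype V] (G : SimpleGraph V) : Prop :=
  ∀ s ∈ stableSets G, (∀ t ∈ stableSets G, s ⊆ t → s = t) → s.card = indepNum G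

/-!
Disjoint union adds independence numbers and multiplies independence polynomials; the join
`G + H` of two graphs with the same independence number `a` has independence number `a` and
independence polynomial `I(G) + I(H) - 1`; both operations preserve well-coveredness.
Starting from edgeless graphs they produce, for `k = q + 4` and `N = 20 q + 1`, the well-covered
graph `A = (4 K₁₀ + K_{4,…,4}) ⊔ q K_N` (with `1800` parts) of independence number `k` and
`I(A) = P · (1 + N x)^q`, where `P = 1 + 7240 x + 11400 x² + 11200 x³ + 11800 x⁴`.
The top three coefficients of `P · (1 + N x)^q` are computed exactly by induction on `q`; since
`N` grows with `k`, the coefficient of `x^(k-1)` is smaller than both of its neighbours.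
This dip survives in `I(A + A) = 2 I(A) - 1`, and `A + A` is connected.
-/

open Polynomial Finset

section StableSets
variable {V : Type*} [Fintype V] {G : SimpleGraph V}

lemma mem_stableSets {s : Finset V} :
    s ∈ stableSets G ↔ ∀ v ∈ s, ∀ w ∈ s, ¬ G.Adj v w := by
  simp [stableSets]

lemma mem_stableSets_of_subset {s t : Finset V} (ht : t ∈ stableSets G) (hst : s ⊆ t) :
    s ∈ stableSets G :=
  mem_stableSets.2 fun v hv w hw => mem_stableSets.1 ht v (hst hv) w (hst hw)

lemma empty_mem_stableSets (G : SimpleGraph V) : ∅ ∈ stableSets G := by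
  simp [mem_stableSets]

lemma exists_mem_stableSets_card_eq_indepNum (G : SimpleGraph V) :
    ∃ s ∈ stableSets G, s.card = indepNum G := by
  obtain ⟨s, hs, h⟩ := exists_mem_eq_sup _ ⟨∅, empty_mem_stableSets G⟩ card
  exact ⟨s, hs, h.symm⟩

lemma card_le_indepNum {s : Finset V} (hs : s ∈ stableSets G) : s.card ≤ indepNum G :=
  le_sup hs

lemma nonempty_of_indepNum_pos (h : 0 < indepNum G) : Nonempty V := by
  obtain ⟨s, -, hs⟩ := exists_mem_stableSets_card_eq_indepNum G
  obtain ⟨v, -⟩ := card_pos.1 (hs ▸ h)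
  exact ⟨v⟩

lemma wellCovered_iff_exists_insert [DecidableEq V] : WellCovered G ↔ ∀ s ∈ stableSets G,
    s.card < indepNum G → ∃ v ∉ s, insert v s ∈ stableSets G := by
  constructor
  · intro hG s hs hlt
    by_contra! hmax
    refine hlt.ne (hG s hs fun t ht hst => ?_)
    by_contra hne
    obtain ⟨v, hvt, hvs⟩ := exists_of_ssubset (hst.ssubset_of_ne hne)
    exact hmax v hvs (mem_stableSets_of_subset ht (insert_subset hvt hst))
  · intro hext s hs hmax
    refine (card_le_indepNum hs).eq_or_lt.resolve_right fun hlt => ?_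
    obtain ⟨v, hvs, hins⟩ := hext s hs hlt
    exact hvs (hmax _ hins (subset_insert v s) ▸ mem_insert_self v s)

end StableSets

section Iso
variable {V W : Type*} [Fintype V] [Fintype W] {G : SimpleGraph V} {G' : SimpleGraph W}

lemma stableSets_eq_map_of_iso (e : G ≃g G') :
    stableSets G' = (stableSets G).map e.toEquiv.finsetCongr.toEmbedding := by
  ext s
  simp only [mem_map_equiv, mem_stableSets, Equiv.finsetCongr_symm, Equiv.finsetCongr_apply,
    Equiv.symm_symm, e.surjective.forall, e.map_adj_iff]
  simp

lemma indepPoly_eq_of_iso (e : G ≃g G') : indepPoly G' = indepPoly G := by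
  simp [indepPoly, stableSets_eq_map_of_iso e]

lemma indepNum_eq_of_iso (e : G ≃g G') : indepNum G' = indepNum G := by
  simp only [indepNum, stableSets_eq_map_of_iso e, sup_map]
  congr
  ext s
  simp

lemma WellCovered.of_iso [DecidableEq V] [DecidableEq W] (e : G ≃g G') (hG : WellCovered G) :
    WellCovered G' := by
  rw [wellCovered_iff_exists_insert] at hG ⊢
  rw [stableSets_eq_map_of_iso e, indepNum_eq_of_iso e, forall_mem_map]
  intro s hs hlt
  obtain ⟨v, hv, hins⟩ := hG s hs (by simpa using hlt)
  refine ⟨e v, by simpa [← RelIso.coe_fn_toEquiv] using hv, mem_map.2 ⟨_, hins, ?_⟩⟩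
  simp [map_insert]

end Iso

section Sum
variable {V W : Type*} [Fintype V] [Fintype W] {G : SimpleGraph V} {H : SimpleGraph W}

lemma mem_stableSets_sum {u : Finset (V ⊕ W)} :
    u ∈ stableSets (G ⊕g H) ↔ u.toLeft ∈ stableSets G ∧ u.toRight ∈ stableSets H := by
  simp only [mem_stableSets, mem_toLeft, mem_toRight]
  constructor
  · exact fun h => ⟨fun v hv w hw => h _ hv _ hw, fun v hv w hw => h _ hv _ hw⟩
  · rintro ⟨hG, hH⟩ (v | v) hv (w | w) hw <;> simp_all

lemma indepPoly_sum : indepPoly (G ⊕g H) = indepPoly G * indepPoly H := by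
  rw [indepPoly, indepPoly, indepPoly, sum_mul_sum, ← sum_product']
  refine sum_nbij' (fun u => (u.toLeft, u.toRight)) (fun p => p.1.disjSum p.2) ?_ ?_ ?_ ?_ ?_
  · exact fun u hu => mem_product.2 (mem_stableSets_sum.1 hu)
  · exact fun p hp => mem_stableSets_sum.2 (by simpa using mem_product.1 hp)
  · exact fun u _ => toLeft_disjSum_toRight
  · simp
  · intro u _
    rw [← pow_add, card_toLeft_add_card_toRight]

lemma indepNum_sum : indepNum (G ⊕g H) = indepNum G + indepNum H := by
  refine le_antisymm (Finset.sup_le fun u hu => ?_) ?_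
  · obtain ⟨hG, hH⟩ := mem_stableSets_sum.1 hu
    rw [← card_toLeft_add_card_toRight]
    exact add_le_add (card_le_indepNum hG) (card_le_indepNum hH)
  · obtain ⟨s, hs, hsG⟩ := exists_mem_stableSets_card_eq_indepNum G
    obtain ⟨t, ht, htH⟩ := exists_mem_stableSets_card_eq_indepNum H
    rw [← hsG, ← htH, ← card_disjSum]
    exact card_le_indepNum (mem_stableSets_sum.2 (by simpa using ⟨hs, ht⟩))

lemma WellCovered.sum [DecidableEq V] [DecidableEq W] (hG : WellCovered G) (hH : WellCovered H) :
    WellCovered (G ⊕g H) := by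
  rw [wellCovered_iff_exists_insert] at hG hH ⊢
  intro u hu hlt
  obtain ⟨huG, huH⟩ := mem_stableSets_sum.1 hu
  rw [indepNum_sum, ← card_toLeft_add_card_toRight] at hlt
  by_cases hltG : u.toLeft.card < indepNum G
  · obtain ⟨v, hv, hins⟩ := hG _ huG hltG
    exact ⟨.inl v, by simpa using hv, mem_stableSets_sum.2 (by simpa using ⟨hins, huH⟩)⟩
  · obtain ⟨w, hw, hins⟩ := hH _ huH (by linarith [card_le_indepNum huG])
    exact ⟨.inr w, by simpa using hw, mem_stableSets_sum.2 (by simpa using ⟨huG, hins⟩)⟩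

end Sum

/-- The join (Zykov sum) `G + H`. -/
def SimpleGraph.join {V W : Type*} (G : SimpleGraph V) (H : SimpleGraph W) :
    SimpleGraph (V ⊕ W) :=
  (G ⊕g H) ⊔ completeBipartiteGraph V W

lemma SimpleGraph.connected_join {V W : Type*} [Nonempty V] [Nonempty W] (G : SimpleGraph V)
    (H : SimpleGraph W) : (G.join H).Connected := by
  obtain ⟨v⟩ := ‹Nonempty V›
  obtain ⟨w⟩ := ‹Nonempty W›
  have hadj (x : V) (y : W) : (G.join H).Adj (.inl x) (.inr y) := by simp [SimpleGraph.join]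
  refine (connected_iff_exists_forall_reachable _).2 ⟨.inl v, ?_⟩
  rintro (x | y)
  · exact (hadj v w).reachable.trans (hadj x w).symm.reachable
  · exact (hadj v y).reachable

section Join
variable {V W : Type*} [Fintype V] [Fintype W] {G : SimpleGraph V} {H : SimpleGraph W}

lemma mem_stableSets_join {u : Finset (V ⊕ W)} :
    u ∈ stableSets (G.join H) ↔
      u ∈ stableSets (G ⊕g H) ∧ (u.toLeft = ∅ ∨ u.toRight = ∅) := by
  simp only [mem_stableSets, SimpleGraph.join, SimpleGraph.sup_adj, not_or]
  constructor
  · intro h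
    refine ⟨fun v hv w hw => (h v hv w hw).1, ?_⟩
    by_contra! hne
    obtain ⟨⟨a, ha⟩, ⟨b, hb⟩⟩ := hne
    exact (h _ (mem_toLeft.1 ha) _ (mem_toRight.1 hb)).2 (by simp)
  · rintro ⟨h, hlr⟩ v hv w hw
    refine ⟨h v hv w hw, ?_⟩
    rcases hlr with hlr | hlr <;> rcases v with v | v <;> rcases w with w | w <;>
      simp_all [← mem_toLeft, ← mem_toRight]

lemma stableSets_join [DecidableEq V] [DecidableEq W] :
    stableSets (G.join H) =
      (stableSets G).map (mapEmbedding .inl).toEmbedding ∪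
        (stableSets H).map (mapEmbedding .inr).toEmbedding := by
  ext u
  simp only [mem_stableSets_join, mem_stableSets_sum, mem_union, mem_map,
    RelEmbedding.coe_toEmbedding, mapEmbedding_apply, ← disjSum_empty, ← empty_disjSum,
    disjSum_eq_iff]
  constructor
  · rintro ⟨⟨hl, hr⟩, he | he⟩
    · exact Or.inr ⟨_, hr, he.symm, rfl⟩
    · exact Or.inl ⟨_, hl, rfl, he.symm⟩
  · rintro (⟨s, hs, rfl, he⟩ | ⟨t, ht, he, rfl⟩)
    · exact ⟨⟨hs, he ▸ empty_mem_stableSets H⟩, .inr he.symm⟩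
    · exact ⟨⟨he ▸ empty_mem_stableSets G, ht⟩, .inl he.symm⟩

lemma indepPoly_join : indepPoly (G.join H) = indepPoly G + indepPoly H - 1 := by
  classical
  have hinter : (stableSets G).map (mapEmbedding .inl).toEmbedding ∩
      (stableSets H).map (mapEmbedding (.inr : W ↪ V ⊕ W)).toEmbedding = {∅} := by
    ext u
    simp only [mem_inter, mem_map, RelEmbedding.coe_toEmbedding, mapEmbedding_apply,
      ← disjSum_empty, ← empty_disjSum, disjSum_eq_iff, mem_singleton]
    constructor
    · rintro ⟨⟨s, -, rfl, hr⟩, ⟨t, -, hl, rfl⟩⟩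
      rw [← toLeft_disjSum_toRight (u := u), ← hl, ← hr, disjSum_empty, map_empty]
    · rintro rfl
      have h : (∅ : Finset V) = (∅ : Finset (V ⊕ W)).toLeft ∧
          (∅ : Finset W) = (∅ : Finset (V ⊕ W)).toRight := by
        constructor <;> ext <;> simp
      exact ⟨⟨∅, empty_mem_stableSets G, h⟩, ⟨∅, empty_mem_stableSets H, h⟩⟩
  have hone : (1 : ℤ[X]) = ∑ s ∈ ({∅} : Finset (Finset (V ⊕ W))), X ^ s.card := by simp
  rw [eq_sub_iff_add_eq, indepPoly, stableSets_join, hone, ← hinter, sum_union_inter, sum_map,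
    sum_map]
  simp [indepPoly]

lemma indepNum_join : indepNum (G.join H) = max (indepNum G) (indepNum H) := by
  classical
  simp only [indepNum, stableSets_join, sup_union, sup_map]
  congr 2 <;> ext s <;> simp

lemma WellCovered.join [DecidableEq V] [DecidableEq W] (hG : WellCovered G) (hH : WellCovered H)
    (hGH : indepNum G = indepNum H) : WellCovered (G.join H) := by
  rw [wellCovered_iff_exists_insert] at hG hH ⊢
  rw [stableSets_join, indepNum_join, ← hGH, max_self]
  simp only [mem_union, mem_map, RelEmbedding.coe_toEmbedding, mapEmbedding_apply]
  rintro _ (⟨s, hs, rfl⟩ | ⟨t, ht, rfl⟩) hlt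
  · obtain ⟨v, hv, hins⟩ := hG s hs (by simpa using hlt)
    exact ⟨.inl v, by simpa using hv, .inl ⟨_, hins, by simp⟩⟩
  · obtain ⟨w, hw, hins⟩ := hH t ht (by simpa [hGH] using hlt)
    exact ⟨.inr w, by simpa using hw, .inr ⟨_, hins, by simp⟩⟩

end Join

section Edgeless
variable {V : Type*} [Fintype V]

lemma stableSets_bot : stableSets (⊥ : SimpleGraph V) = univ := by
  ext s
  simp [mem_stableSets]

lemma indepPoly_bot : indepPoly (⊥ : SimpleGraph V) = (1 + X) ^ Fintype.card V := by
  simpa [indepPoly, stableSets_bot, add_comm] using Fintype.sum_pow_mul_eq_add_pow V (X : ℤ[X]) 1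

lemma indepNum_bot : indepNum (⊥ : SimpleGraph V) = Fintype.card V := by
  rw [indepNum, stableSets_bot, ← card_univ]
  exact le_antisymm (Finset.sup_le fun s _ => card_le_univ s) (le_sup (mem_univ _))

lemma wellCovered_bot [DecidableEq V] : WellCovered (⊥ : SimpleGraph V) := by
  rw [wellCovered_iff_exists_insert]
  intro s _ hlt
  obtain ⟨v, -, hv⟩ :=
    exists_mem_notMem_of_card_lt_card (t := univ) (by simpa [indepNum_bot] using hlt)
  exact ⟨v, hv, by simp [stableSets_bot]⟩

end Edgeless

def WellCoveredRealizable (a : ℕ) (p : ℤ[X]) : Prop :=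
  ∃ (n : ℕ) (G : SimpleGraph (Fin n)), WellCovered G ∧ indepNum G = a ∧ indepPoly G = p

namespace WellCoveredRealizable
variable {a b : ℕ} {p p₁ p₂ : ℤ[X]}

lemma of_wellCovered {V : Type*} [Fintype V] {G : SimpleGraph V} (hG : WellCovered G) :
    WellCoveredRealizable (indepNum G) (indepPoly G) := by
  classical
  let e := SimpleGraph.Iso.map (Fintype.equivFin V) G
  exact ⟨_, _, hG.of_iso e, indepNum_eq_of_iso e, indepPoly_eq_of_iso e⟩

lemma edgeless (n : ℕ) : WellCoveredRealizable n ((1 + X) ^ n) := by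
  simpa [indepNum_bot, indepPoly_bot] using of_wellCovered (wellCovered_bot (V := Fin n))

lemma mul (h₁ : WellCoveredRealizable a p₁) (h₂ : WellCoveredRealizable b p₂) :
    WellCoveredRealizable (a + b) (p₁ * p₂) := by
  obtain ⟨n, G, hG, rfl, rfl⟩ := h₁
  obtain ⟨m, H, hH, rfl, rfl⟩ := h₂
  simpa [indepNum_sum, indepPoly_sum] using of_wellCovered (hG.sum hH)

lemma join (h₁ : WellCoveredRealizable a p₁) (h₂ : WellCoveredRealizable a p₂) :
    WellCoveredRealizable a (p₁ + p₂ - 1) := by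
  obtain ⟨n, G, hG, rfl, rfl⟩ := h₁
  obtain ⟨m, H, hH, hGH, rfl⟩ := h₂
  simpa [indepNum_join, indepPoly_join, hGH] using of_wellCovered (hG.join hH hGH.symm)

lemma exists_connected_join_self (h : WellCoveredRealizable a p) (ha : 0 < a) :
    ∃ (n : ℕ) (G : SimpleGraph (Fin n)), G.Connected ∧ WellCovered G ∧ indepNum G = a ∧
      indepPoly G = 2 * p - 1 := by
  obtain ⟨n, G, hG, rfl, rfl⟩ := h
  have := nonempty_of_indepNum_pos ha
  let e := SimpleGraph.Iso.map (Fintype.equivFin _) (G.join G)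
  refine ⟨_, _, e.connected_iff.1 (G.connected_join G), (hG.join hG rfl).of_iso e, ?_, ?_⟩
  · rw [indepNum_eq_of_iso e, indepNum_join, max_self]
  · rw [indepPoly_eq_of_iso e, indepPoly_join, two_mul]

lemma completeGraph {n : ℕ} (hn : 0 < n) : WellCoveredRealizable 1 (1 + (n : ℤ[X]) * X) := by
  induction n, hn using Nat.le_induction with
  | base => simpa using edgeless 1
  | succ n _ ih =>
    convert ih.join (edgeless 1) using 1
    push_cast
    ring

lemma cliqueUnion {N : ℕ} (hN : 0 < N) (q : ℕ) :
    WellCoveredRealizable q ((1 + (N : ℤ[X]) * X) ^ q) := by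
  induction q with
  | zero => simpa using edgeless 0
  | succ q ih => simpa [pow_succ] using ih.mul (completeGraph hN)

lemma completeMultipartite (r m : ℕ) :
    WellCoveredRealizable r (((m : ℤ[X]) + 1) * (1 + X) ^ r - (m : ℤ[X])) := by
  induction m with
  | zero => simpa using edgeless r
  | succ m ih =>
    convert ih.join (edgeless r) using 1
    push_cast
    ring

end WellCoveredRealizable

section TopCoefficients
variable {R : Type*} [CommRing R] (c : R) {f : R[X]} {n : ℕ}

lemma coeff_mul_one_add_C_mul_X_succ (g : R[X]) (m : ℕ) :
    (g * (1 + C c * X)).coeff (m + 1) = g.coeff (m + 1) + c * g.coeff m := by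
  rw [mul_add, mul_one, coeff_add, mul_left_comm, coeff_C_mul, coeff_mul_X]

lemma natDegree_mul_one_add_C_mul_X_pow_le (hf : f.natDegree ≤ n) (q : ℕ) :
    (f * (1 + C c * X) ^ q).natDegree ≤ n + q := by
  refine natDegree_mul_le.trans (add_le_add hf (natDegree_pow_le.trans ?_))
  have : (1 + C c * X).natDegree ≤ 1 := by compute_degree
  simpa using Nat.mul_le_mul_left q this

lemma coeff_mul_one_add_C_mul_X_pow_top (hf : f.natDegree ≤ n) (q : ℕ) :
    (f * (1 + C c * X) ^ q).coeff (n + q) = f.coeff n * c ^ q := by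
  induction q with
  | zero => simp
  | succ q ih =>
    rw [pow_succ, ← mul_assoc, ← add_assoc, coeff_mul_one_add_C_mul_X_succ, ih,
      coeff_eq_zero_of_natDegree_lt ((natDegree_mul_one_add_C_mul_X_pow_le c hf q).trans_lt
        (by omega))]
    ring

lemma coeff_mul_one_add_C_mul_X_pow_top_sub_one (hf : f.natDegree ≤ n + 1) (q : ℕ) :
    c * (f * (1 + C c * X) ^ q).coeff (n + q) =
      f.coeff n * c ^ (q + 1) + q * f.coeff (n + 1) * c ^ q := by
  induction q with
  | zero => simpa using mul_comm _ _
  | succ q ih =>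
    rw [pow_succ, ← mul_assoc, ← add_assoc, coeff_mul_one_add_C_mul_X_succ, mul_add, ih,
      add_right_comm, coeff_mul_one_add_C_mul_X_pow_top c hf]
    push_cast
    ring

lemma coeff_mul_one_add_C_mul_X_pow_top_sub_two (hf : f.natDegree ≤ n + 2) (q : ℕ) :
    c ^ 2 * (f * (1 + C c * X) ^ q).coeff (n + q) =
      f.coeff n * c ^ (q + 2) + q * f.coeff (n + 1) * c ^ (q + 1) +
        q.choose 2 * f.coeff (n + 2) * c ^ q := by
  induction q with
  | zero => simpa using mul_comm _ _
  | succ q ih =>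
    have h1 := coeff_mul_one_add_C_mul_X_pow_top_sub_one c (n := n + 1) hf q
    rw [add_right_comm n 1 q] at h1
    rw [pow_succ (1 + C c * X), ← mul_assoc, ← add_assoc, coeff_mul_one_add_C_mul_X_succ,
      Nat.choose_succ_succ, Nat.choose_one_right]
    push_cast
    linear_combination c * h1 + c * ih

end TopCoefficients

lemma not_polyUnimodal_of_coeff_lt {p : ℤ[X]} {i : ℕ} (h₁ : p.coeff (i + 1) < p.coeff i)
    (h₂ : p.coeff (i + 1) < p.coeff (i + 2)) : ¬ PolyUnimodal p := by
  rintro ⟨m, hup, hdown⟩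
  rcases le_total m (i + 1) with hm | hm
  · exact (hdown (i + 1) (i + 2) hm (by omega)).not_gt h₂
  · exact (hup i (i + 1) (by omega) hm).not_gt h₁

lemma not_polyUnimodal_two_mul_sub_one {p : ℤ[X]} {i : ℕ} (h₁ : p.coeff (i + 1) < p.coeff i)
    (h₂ : p.coeff (i + 1) < p.coeff (i + 2)) : ¬ PolyUnimodal (2 * p - 1) := by
  refine not_polyUnimodal_of_coeff_lt (i := i) ?_ (by simpa [coeff_one] using h₂)
  simp only [coeff_sub, coeff_ofNat_mul, coeff_one]
  split_ifs <;> omega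

noncomputable def corePoly : ℤ[X] := 1 + 7240 * X + 11400 * X ^ 2 + 11200 * X ^ 3 + 11800 * X ^ 4

lemma wellCoveredRealizable_corePoly : WellCoveredRealizable 4 corePoly := by
  convert (WellCoveredRealizable.cliqueUnion (N := 10) (by norm_num) 4).join
    (WellCoveredRealizable.completeMultipartite 4 1799) using 1
  simp only [corePoly]
  push_cast
  ring

lemma corePoly_mul_coeff_dip {N q : ℕ} (hN : 20 * q < N) :
    (corePoly * (1 + (N : ℤ[X]) * X) ^ q).coeff (q + 3) <
        (corePoly * (1 + (N : ℤ[X]) * X) ^ q).coeff (q + 2) ∧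
      (corePoly * (1 + (N : ℤ[X]) * X) ^ q).coeff (q + 3) <
        (corePoly * (1 + (N : ℤ[X]) * X) ^ q).coeff (q + 4) := by
  have hdeg : corePoly.natDegree ≤ 4 := by unfold corePoly; compute_degree!
  have hcoeff :
      corePoly.coeff 2 = 11400 ∧ corePoly.coeff 3 = 11200 ∧ corePoly.coeff 4 = 11800 := by
    simp [corePoly, coeff_one, coeff_X, coeff_X_pow]
  have h4 := coeff_mul_one_add_C_mul_X_pow_top (N : ℤ) hdeg q
  have h3 := coeff_mul_one_add_C_mul_X_pow_top_sub_one (N : ℤ) (n := 3) hdeg q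
  have h2 := coeff_mul_one_add_C_mul_X_pow_top_sub_two (N : ℤ) (n := 2) hdeg q
  simp only [map_natCast, hcoeff, add_comm _ q] at h2 h3 h4
  set c := (corePoly * (1 + (N : ℤ[X]) * X) ^ q).coeff
  simp only [pow_succ _ q, pow_add _ q 2] at h2 h3
  have hNq : 20 * (q : ℤ) < N := by exact_mod_cast hN
  have hN : (0 : ℤ) < N := by omega
  have hM : (0 : ℤ) < (N : ℤ) ^ q := by positivity
  constructor
  · have : (N : ℤ) ^ 2 * c (q + 3) < (N : ℤ) ^ 2 * c (q + 2) := by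
      rw [h2, sq, mul_assoc, h3]
      nlinarith [mul_pos (mul_pos hN hM) (by omega : (0 : ℤ) < N - 3 * q),
        mul_nonneg (Nat.cast_nonneg (q.choose 2) : (0 : ℤ) ≤ _) hM.le]
    exact lt_of_mul_lt_mul_left this (by positivity)
  · have : (N : ℤ) * c (q + 3) < (N : ℤ) * c (q + 4) := by
      rw [h3, h4]
      nlinarith [mul_pos hM (by omega : (0 : ℤ) < 600 * N - 11800 * q)]
    exact lt_of_mul_lt_mul_left this hN.le

/-- For every `k ≥ 4`, there exists a finite connected well-covered graph `G` with
`α(G) = k` whose independence polynomial is not unimodal. -/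
theorem exists_connected_wellCovered_not_unimodal (k : ℕ) (hk : 4 ≤ k) :
    ∃ (n : ℕ) (G : SimpleGraph (Fin n)), G.Connected ∧ WellCovered G ∧
      indepNum G = k ∧ ¬ PolyUnimodal (indepPoly G) := by
  obtain ⟨q, rfl⟩ := Nat.exists_eq_add_of_le hk
  have hA := wellCoveredRealizable_corePoly.mul (.cliqueUnion (N := 20 * q + 1) (by omega) q)
  obtain ⟨n, G, hconn, hwc, hnum, hpoly⟩ := hA.exists_connected_join_self (by omega)
  obtain ⟨hdip₁, hdip₂⟩ := corePoly_mul_coeff_dip (N := 20 * q + 1) (q := q) (by omega)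
  exact ⟨n, G, hconn, hwc, hnum, hpoly ▸ not_polyUnimodal_two_mul_sub_one hdip₁ hdip₂⟩
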